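/- Let V and W be complex normed spaces equipped with seminorms L_V : V → [0,∞) and L_W : W → [0,∞). Let R : V → W and S : W → V be linear maps such that L_W(R v) ≤ L_V(v) for all v ∈ V and L_V(S w) ≤ L_W(w) for all w ∈ W, and suppose there is a constant γ ≥ 0 such that ‖v − S(R v)‖ ≤ γ · L_V(v) for all v ∈ V. For a seminorm L on a normed space E and continuous linear functionals φ, ψ on E, define d_L(φ, ψ) = sup { |φ(x) − ψ(x)| : x ∈ E, L(x) ≤ 1 } (a value in [0,∞]). Then for all continuous linear functionals φ, ψ on V with ‖φ‖ ≤ 1 and ‖ψ‖ ≤ 1 one has d_{L_W}(φ ∘ S, ψ ∘ S) ≤ d_{L_V}(φ, ψ) ≤ d_{L_W}(φ ∘ S, ψ ∘ S) + 2γ. -/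

import Mathlib

/-!
Pulling back along `S` can only shrink the distance, because `S` maps the `L_W`-unit ball into
the `L_V`-unit ball. Conversely, every `v` in the `L_V`-unit ball has `R v` in the `L_W`-unit
ball, and `S (R v)` lies within `γ` of `v`; since `φ - ψ` has norm at most `2`, replacing `v` by
`S (R v)` changes `|φ v - ψ v|` by at most `2γ`.
-/

/-- Connes' distance function associated to a (Lipschitz) seminorm `L` on a normed space `E`:
`d_L(φ, ψ) = sup { |φ(x) − ψ(x)| : x ∈ E, L(x) ≤ 1 }`, valued in `[0,∞]`. -/
noncomputable def connesDist {E : Type*} [NormedAddCommGroup E]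
    (L : E → ℝ) (φ ψ : E → ℂ) : ENNReal :=
  ⨆ x ∈ {x : E | L x ≤ 1}, (‖φ x - ψ x‖₊ : ENNReal)

open scoped ENNReal

section ConnesDist

variable {E F : Type*} [NormedAddCommGroup E] [NormedAddCommGroup F]

theorem enorm_sub_le_connesDist {L : E → ℝ} (φ ψ : E → ℂ) {x : E} (hx : L x ≤ 1) :
    ‖φ x - ψ x‖ₑ ≤ connesDist L φ ψ :=
  le_iSup₂ (f := fun x (_ : x ∈ {x : E | L x ≤ 1}) => ‖φ x - ψ x‖ₑ) x hx

theorem connesDist_comp_le {L : E → ℝ} {L' : F → ℝ} (φ ψ : E → ℂ) {T : F → E}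
    (hT : ∀ y, L (T y) ≤ L' y) :
    connesDist L' (φ ∘ T) (ψ ∘ T) ≤ connesDist L φ ψ :=
  iSup₂_le fun y hy => enorm_sub_le_connesDist φ ψ ((hT y).trans hy)

theorem connesDist_le_of_forall_le_add {L : E → ℝ} {L' : F → ℝ} {φ ψ : E → ℂ} {φ' ψ' : F → ℂ}
    {c : ℝ≥0∞} (h : ∀ x, L x ≤ 1 → ∃ y, L' y ≤ 1 ∧ ‖φ x - ψ x‖ₑ ≤ ‖φ' y - ψ' y‖ₑ + c) :
    connesDist L φ ψ ≤ connesDist L' φ' ψ' + c :=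
  iSup₂_le fun x hx => by
    obtain ⟨y, hy, hle⟩ := h x hx
    exact hle.trans (add_le_add_left (enorm_sub_le_connesDist φ' ψ' hy) c)

end ConnesDist

theorem ENNReal.ofReal_mul_le_of_le_one {t c : ℝ} (ht₀ : 0 ≤ t) (ht₁ : t ≤ 1) :
    ENNReal.ofReal (t * c) ≤ ENNReal.ofReal c := by
  rw [ENNReal.ofReal_mul ht₀]
  exact mul_le_of_le_one_left' (ENNReal.ofReal_le_one.mpr ht₁)

namespace ContinuousLinearMap

variable {𝕜 E F : Type*} [NontriviallyNormedField 𝕜] [SeminormedAddCommGroup E] [NormedSpace 𝕜 E]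
  [SeminormedAddCommGroup F] [NormedSpace 𝕜 F]

theorem norm_apply_sub_apply_le (φ ψ : E →L[𝕜] F) (u v : E) :
    ‖φ v - ψ v‖ ≤ ‖φ u - ψ u‖ + (‖φ‖ + ‖ψ‖) * ‖v - u‖ :=
  calc ‖φ v - ψ v‖ = ‖(φ u - ψ u) + (φ - ψ) (v - u)‖ := by
        simp only [sub_apply, map_sub]; abel_nf
    _ ≤ ‖φ u - ψ u‖ + ‖φ - ψ‖ * ‖v - u‖ := norm_add_le_of_le le_rfl ((φ - ψ).le_opNorm _)
    _ ≤ ‖φ u - ψ u‖ + (‖φ‖ + ‖ψ‖) * ‖v - u‖ := by gcongr; exact norm_sub_le φ ψ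

theorem enorm_apply_sub_apply_le_add_ofReal {φ ψ : E →L[𝕜] F} (hφ : ‖φ‖ ≤ 1) (hψ : ‖ψ‖ ≤ 1)
    {u v : E} {γ t : ℝ} (ht₀ : 0 ≤ t) (ht₁ : t ≤ 1) (huv : ‖v - u‖ ≤ γ * t) :
    ‖φ v - ψ v‖ₑ ≤ ‖φ u - ψ u‖ₑ + ENNReal.ofReal (2 * γ) := by
  have hreal : ‖φ v - ψ v‖ ≤ ‖φ u - ψ u‖ + t * (2 * γ) :=
    calc ‖φ v - ψ v‖ ≤ ‖φ u - ψ u‖ + (‖φ‖ + ‖ψ‖) * ‖v - u‖ := φ.norm_apply_sub_apply_le ψ u v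
      _ ≤ ‖φ u - ψ u‖ + 2 * ‖v - u‖ := by gcongr; linarith
      _ ≤ ‖φ u - ψ u‖ + t * (2 * γ) := by linarith
  calc ‖φ v - ψ v‖ₑ ≤ ‖φ u - ψ u‖ₑ + ENNReal.ofReal (t * (2 * γ)) := by
        rw [← ofReal_norm, ← ofReal_norm]
        exact (ENNReal.ofReal_le_ofReal hreal).trans ENNReal.ofReal_add_le
    _ ≤ ‖φ u - ψ u‖ₑ + ENNReal.ofReal (2 * γ) :=
        add_le_add_right (ENNReal.ofReal_mul_le_of_le_one ht₀ ht₁) _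

end ContinuousLinearMap

theorem connesDist_pullback_S_general {V W : Type*}
    [NormedAddCommGroup V] [NormedSpace ℂ V]
    [NormedAddCommGroup W] [NormedSpace ℂ W]
    (LV : Seminorm ℂ V) (LW : Seminorm ℂ W)
    (R : V →ₗ[ℂ] W) (S : W →ₗ[ℂ] V)
    (hR : ∀ v : V, LW (R v) ≤ LV v)
    (hS : ∀ w : W, LV (S w) ≤ LW w)
    (γ : ℝ)
    (happ : ∀ v : V, ‖v - S (R v)‖ ≤ γ * LV v)
    (φ ψ : V →L[ℂ] ℂ) (hφ : ‖φ‖ ≤ 1) (hψ : ‖ψ‖ ≤ 1) :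
    connesDist (fun w => LW w) (fun w => φ (S w)) (fun w => ψ (S w))
        ≤ connesDist (fun v => LV v) (fun v => φ v) (fun v => ψ v) ∧
    connesDist (fun v => LV v) (fun v => φ v) (fun v => ψ v)
        ≤ connesDist (fun w => LW w) (fun w => φ (S w)) (fun w => ψ (S w))
          + ENNReal.ofReal (2 * γ) := by
  refine ⟨connesDist_comp_le φ ψ hS, connesDist_le_of_forall_le_add fun v hv => ?_⟩
  exact ⟨R v, (hR v).trans hv,
    ContinuousLinearMap.enorm_apply_sub_apply_le_add_ofReal hφ hψ (apply_nonneg LV v) hv (happ v)⟩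

/-- Proposition 2.3(2): if `R, S` are Lipschitz-contractive linear maps with
`‖v − S(R v)‖ ≤ γ L_V(v)`, then for norm-`≤ 1` functionals `φ, ψ` on `V` one has
`d_{L_W}(φ∘S, ψ∘S) ≤ d_{L_V}(φ, ψ) ≤ d_{L_W}(φ∘S, ψ∘S) + 2γ`. -/
theorem connesDist_pullback_S {V W : Type*}
    [NormedAddCommGroup V] [NormedSpace ℂ V]
    [NormedAddCommGroup W] [NormedSpace ℂ W]
    (LV : Seminorm ℂ V) (LW : Seminorm ℂ W)
    (R : V →ₗ[ℂ] W) (S : W →ₗ[ℂ] V)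
    (hR : ∀ v : V, LW (R v) ≤ LV v)
    (hS : ∀ w : W, LV (S w) ≤ LW w)
    (γ : ℝ) (hγ : 0 ≤ γ)
    (happ : ∀ v : V, ‖v - S (R v)‖ ≤ γ * LV v)
    (φ ψ : V →L[ℂ] ℂ) (hφ : ‖φ‖ ≤ 1) (hψ : ‖ψ‖ ≤ 1) :
    connesDist (fun w => LW w) (fun w => φ (S w)) (fun w => ψ (S w))
        ≤ connesDist (fun v => LV v) (fun v => φ v) (fun v => ψ v) ∧
    connesDist (fun v => LV v) (fun v => φ v) (fun v => ψ v)
        ≤ connesDist (fun w => LW w) (fun w => φ (S w)) (fun w => ψ (S w))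
          + ENNReal.ofReal (2 * γ) :=
  connesDist_pullback_S_general LV LW R S hR hS γ happ φ ψ hφ hψ
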